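/- arXiv:1709.01880 — 2 statements merged into one kernel-verified Lean document; each statement's English description precedes it below -/
import Mathlib

section
/- Let u : [0,1] → ℝ be twice continuously differentiable and let a₁, b₁ ∈ ℝ, a₂ ≠ 0, b₂ ≠ 0. Suppose there exist A₁, A₂ ≥ 0 with A₁ + A₂ = 1 such that a₁/a₂ ≥ 2A₂, b₁/b₂ ≤ A₁, and A₂ − 2A₁ ≥ 0. If a₁·u(1) + a₂·u′(1) = 0 and b₁·u(0) + b₂·u′(0) = 0, then ∫_0^1 u″(x)·u(x) dx ≤ 0. -/
open Set intervalIntegral MeasureTheory ProbabilityTheory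

/-!
Integrating by parts, `∫ u'' u = u'(1) u(1) - u'(0) u(0) - ∫ u'²`, and the Robin conditions turn
the boundary terms into `-(a₁/a₂) u(1)² + (b₁/b₂) u(0)²`. Only the second one can be positive; it is
at most `A₁ u(0)² ≤ 2 A₁ u(1)² + 2 A₁ (u(1) - u(0))²`, and `(u(1) - u(0))² ≤ ∫ u'²` by
Cauchy–Schwarz. Since `2 A₁ ≤ A₂` and `3 A₁ ≤ A₁ + A₂ = 1`, both pieces are absorbed by
`2 A₂ u(1)²` and `∫ u'²`.
-/

theorem sq_integral_le_integral_sq {Ω : Type*} [MeasurableSpace Ω] {μ : Measure Ω}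
    [IsProbabilityMeasure μ] {f : Ω → ℝ} (hf : MemLp f 2 μ) :
    (∫ x, f x ∂μ) ^ 2 ≤ ∫ x, f x ^ 2 ∂μ := by
  have := variance_nonneg f μ
  rw [variance_eq_sub hf] at this
  simpa [sub_nonneg] using this

theorem sq_intervalIntegral_le_mul_integral_sq {f : ℝ → ℝ} {a b : ℝ} (hab : a ≤ b)
    (hf : ContinuousOn f (Icc a b)) :
    (∫ x in a..b, f x) ^ 2 ≤ (b - a) * ∫ x in a..b, f x ^ 2 := by
  rcases hab.eq_or_lt with rfl | hlt
  · simp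
  have hvol : volume (Ioc a b) = ENNReal.ofReal (b - a) := Real.volume_Ioc
  have : IsProbabilityMeasure (volume[|Ioc a b]) :=
    cond_isProbabilityMeasure_of_finite (by simp [hvol, hlt]) (by simp [hvol])
  obtain ⟨C, hC⟩ := isCompact_Icc.exists_bound_of_continuousOn hf
  have hLp : MemLp f 2 (volume[|Ioc a b]) := by
    refine MemLp.of_bound ?_ C ?_
    · exact (hf.mono Ioc_subset_Icc_self).aestronglyMeasurable measurableSet_Ioc |>.smul_measure _
    · refine Measure.ae_smul_measure ((ae_restrict_iff' measurableSet_Ioc).2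
        (.of_forall fun x hx => hC x (Ioc_subset_Icc_self hx))) _
  have key := sq_integral_le_integral_sq hLp
  simp only [ProbabilityTheory.cond, MeasureTheory.integral_smul_measure, hvol, smul_eq_mul,
    ENNReal.toReal_inv, ENNReal.toReal_ofReal (sub_nonneg.2 hab)] at key
  rw [mul_pow, inv_pow] at key
  rw [intervalIntegral.integral_of_le hab, intervalIntegral.integral_of_le hab]
  field_simp at key
  exact key

theorem sq_sub_le_mul_integral_sq_deriv {u u' : ℝ → ℝ} {a b : ℝ} (hab : a ≤ b)
    (hu : ∀ x ∈ Icc a b, HasDerivWithinAt u (u' x) (Icc a b) x)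
    (hu' : ContinuousOn u' (Icc a b)) :
    (u b - u a) ^ 2 ≤ (b - a) * ∫ x in a..b, u' x ^ 2 := by
  rw [← integral_eq_sub_of_hasDeriv_right_of_le hab
    (fun x hx => (hu x hx).continuousWithinAt)
    (fun x hx =>
      ((hu x (Ioo_subset_Icc_self hx)).hasDerivAt (Icc_mem_nhds hx.1 hx.2)).hasDerivWithinAt)
    (hu'.intervalIntegrable_of_Icc hab)]
  exact sq_intervalIntegral_le_mul_integral_sq hab hu'

theorem integral_deriv_deriv_mul_self_eq_sub {u u' u'' : ℝ → ℝ} {a b : ℝ} (hab : a ≤ b)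
    (hu : ∀ x ∈ Icc a b, HasDerivWithinAt u (u' x) (Icc a b) x)
    (hu' : ∀ x ∈ Icc a b, HasDerivWithinAt u' (u'' x) (Icc a b) x)
    (hu'' : ContinuousOn u'' (Icc a b)) :
    ∫ x in a..b, u'' x * u x = u' b * u b - u' a * u a - ∫ x in a..b, u' x ^ 2 := by
  have hcont' : ContinuousOn u' (Icc a b) := fun x hx => (hu' x hx).continuousWithinAt
  rw [← uIcc_of_le hab] at hu hu'
  simp_rw [mul_comm (u'' _), mul_comm (u' b), mul_comm (u' a), sq]
  exact integral_mul_deriv_eq_deriv_mul_of_hasDerivWithinAt hu hu'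
    (hcont'.intervalIntegrable_of_Icc hab) (hu''.intervalIntegrable_of_Icc hab)

theorem robin_boundary_form_nonpos {α β A₁ A₂ x y P : ℝ} (hA₁ : 0 ≤ A₁) (hsum : A₁ + A₂ = 1)
    (hα : 2 * A₂ ≤ α) (hβ : β ≤ A₁) (hA₁₂ : 2 * A₁ ≤ A₂) (hP : (x - y) ^ 2 ≤ P) :
    β * y ^ 2 - α * x ^ 2 - P ≤ 0 := by
  have hy : y ^ 2 ≤ 2 * x ^ 2 + 2 * P := by nlinarith [sq_nonneg (x + (x - y))]
  nlinarith [mul_le_mul_of_nonneg_right hβ (sq_nonneg y), mul_le_mul_of_nonneg_left hy hA₁,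
    mul_le_mul_of_nonneg_right hα (sq_nonneg x), sq_nonneg x, sq_nonneg (x - y)]

theorem stmt_9 (u u' u'' : ℝ → ℝ) (a₁ a₂ b₁ b₂ : ℝ) (ha₂ : a₂ ≠ 0) (hb₂ : b₂ ≠ 0)
    (hA : ∃ A₁ A₂ : ℝ, 0 ≤ A₁ ∧ 0 ≤ A₂ ∧ A₁ + A₂ = 1 ∧
      a₁ / a₂ ≥ 2 * A₂ ∧ b₁ / b₂ ≤ A₁ ∧ A₂ - 2 * A₁ ≥ 0)
    (hderiv : ∀ x ∈ Icc (0:ℝ) 1, HasDerivWithinAt u (u' x) (Icc 0 1) x)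
    (hderiv' : ∀ x ∈ Icc (0:ℝ) 1, HasDerivWithinAt u' (u'' x) (Icc 0 1) x)
    (hcont : ContinuousOn u'' (Icc (0:ℝ) 1))
    (hbc1 : a₁ * u 1 + a₂ * u' 1 = 0) (hbc0 : b₁ * u 0 + b₂ * u' 0 = 0) :
    (∫ x in (0:ℝ)..1, u'' x * u x) ≤ 0 := by
  obtain ⟨A₁, A₂, hA₁, -, hsum, hα, hβ, hA⟩ := hA
  have hu' : ContinuousOn u' (Icc 0 1) := fun x hx => (hderiv' x hx).continuousWithinAt
  have hbdry1 : u' 1 = -(a₁ / a₂) * u 1 := by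
    field_simp
    linear_combination hbc1
  have hbdry0 : u' 0 = -(b₁ / b₂) * u 0 := by
    field_simp
    linear_combination hbc0
  have hPoincare := sq_sub_le_mul_integral_sq_deriv zero_le_one hderiv hu'
  rw [sub_zero, one_mul] at hPoincare
  rw [integral_deriv_deriv_mul_self_eq_sub zero_le_one hderiv hderiv' hcont, hbdry1, hbdry0]
  linarith [robin_boundary_form_nonpos hA₁ hsum hα hβ (by linarith) hPoincare]
end

section
/- Under Assumption A3c (a₂ = 0, a₁ ≠ 0, so u(t,1) = 0; there exist A′₁, A′₂ ≥ 0 with A′₁ + A′₂ = μ such that (b₁/b₂)μ − M₂/2 < A′₁ and M₁ < A′₂ − 2A′₁), there exist constants C₃, C₄, C₅ > 0 such that every classical solution u of the boundary-value problem satisfies, for all t ≥ 0: ‖u(t,·)‖² ≤ ‖u(0,·)‖²·e^{−C₃t} + C₄·∫_0^t d₁(s)² ds + C₅·∫_0^t d₂(s)² ds, and ‖u(t,·)‖² ≤ ‖u(0,·)‖²·e^{−C₃t} + (1 − e^{−C₃t})·(C₄·sup_{0≤s≤t} d₁(s)² + C₅·sup_{0≤s≤t} d₂(s)²). -/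
open Set intervalIntegral Real

open MeasureTheory (volume setIntegral_congr_fun integral_Ioc_eq_integral_Ioo)

/-!
Energy estimate for `E(t) = ‖u(t,·)‖²`. Integrating by parts and using `u(t,1) = 0`,
`E' = -2μ u(0) u_x(0) - 2μ ‖u_x‖² + 2⟨u, d⟩ + 2M₁ E - M₂ u(0)²`. Solving the Robin condition for
`u_x(0)` and applying Young's inequality bounds the boundary terms by `2A₁' u(0)²` plus a multiple
of `d₁²`. Splitting `μ = A₁' + A₂'`, the Poincaré inequalities `u(0)² ≤ ‖u_x‖²` and `E ≤ ‖u_x‖²`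
(both from `u(1) = 0`) absorb `u(0)²` and leave `-2A₂' E`; Young again gives
`2⟨u, d⟩ ≤ C₃ E + d₂² / C₃`. Hence `E' ≤ -C₃ E + K d₁² + d₂² / C₃` with `C₃ = A₂' - M₁ > 0`, and
Grönwall's inequality in variation-of-constants form yields both estimates.
-/

theorem two_mul_le_mul_sq_add_sq_div {ε : ℝ} (hε : 0 < ε) (p q : ℝ) :
    2 * p * q ≤ ε * p ^ 2 + q ^ 2 / ε := by
  have h : ε * p ^ 2 + q ^ 2 / ε - 2 * p * q = (ε * p - q) ^ 2 / ε := by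
    field_simp
    ring
  linarith [div_nonneg (sq_nonneg (ε * p - q)) hε.le]

section Interval

variable {a b : ℝ} {f f' f'' g h : ℝ → ℝ}

theorem integral_congr_of_eqOn_Ioo (hab : a ≤ b) (hfg : EqOn f g (Ioo a b)) :
    ∫ x in a..b, f x = ∫ x in a..b, g x := by
  simp only [integral_of_le hab, integral_Ioc_eq_integral_Ioo]
  exact setIntegral_congr_fun measurableSet_Ioo hfg

theorem integral_eq_sub_of_hasDerivWithinAt_Icc (hab : a ≤ b)
    (hf : ∀ x ∈ Icc a b, HasDerivWithinAt f (f' x) (Icc a b) x)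
    (hf' : IntervalIntegrable f' volume a b) :
    ∫ x in a..b, f' x = f b - f a :=
  integral_eq_sub_of_hasDerivAt_of_le hab (fun x hx ↦ (hf x hx).continuousWithinAt)
    (fun x hx ↦ (hf x (Ioo_subset_Icc_self hx)).hasDerivAt (Icc_mem_nhds hx.1 hx.2)) hf'

theorem sq_integral_le_mul_integral_sq (hab : a ≤ b) (hg : ContinuousOn g (Icc a b)) :
    (∫ x in a..b, g x) ^ 2 ≤ (b - a) * ∫ x in a..b, g x ^ 2 := by
  have hgi : IntervalIntegrable g volume a b := hg.intervalIntegrable_of_Icc hab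
  have hg2i : IntervalIntegrable (fun x ↦ g x ^ 2) volume a b :=
    (hg.pow 2).intervalIntegrable_of_Icc hab
  have hvar : ∀ c : ℝ, 0 ≤ (∫ x in a..b, g x ^ 2) - 2 * c * (∫ x in a..b, g x)
      + c ^ 2 * (b - a) := by
    intro c
    have h0 : 0 ≤ ∫ x in a..b, (g x - c) ^ 2 := integral_nonneg hab fun x _ ↦ sq_nonneg _
    have hexp : ∫ x in a..b, (g x - c) ^ 2
        = ∫ x in a..b, (g x ^ 2 - 2 * c * g x + c ^ 2) := by
      congr 1; ext x; ring
    rw [hexp, integral_add (hg2i.sub (hgi.const_mul _)) intervalIntegrable_const,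
      integral_sub hg2i (hgi.const_mul _), integral_const_mul, integral_const,
      smul_eq_mul] at h0
    linarith
  rcases hab.eq_or_lt with rfl | hlt
  · simp
  · have hL : 0 < b - a := sub_pos.mpr hlt
    have := hvar ((∫ x in a..b, g x) / (b - a))
    field_simp at this
    nlinarith

theorem sq_le_mul_integral_deriv_sq_of_right_eq_zero (hab : a ≤ b)
    (hf : ∀ x ∈ Icc a b, HasDerivWithinAt f (f' x) (Icc a b) x)
    (hf' : ContinuousOn f' (Icc a b)) (hfb : f b = 0) {x : ℝ} (hx : x ∈ Icc a b) :
    f x ^ 2 ≤ (b - a) * ∫ y in a..b, f' y ^ 2 := by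
  have hsub : Icc x b ⊆ Icc a b := Icc_subset_Icc_left hx.1
  have hftc : ∫ y in x..b, f' y = -f x := by
    rw [integral_eq_sub_of_hasDerivWithinAt_Icc hx.2 (fun y hy ↦ (hf y (hsub hy)).mono hsub)
      ((hf'.mono hsub).intervalIntegrable_of_Icc hx.2), hfb, zero_sub]
  calc f x ^ 2 = (∫ y in x..b, f' y) ^ 2 := by rw [hftc, neg_sq]
    _ ≤ (b - x) * ∫ y in x..b, f' y ^ 2 := sq_integral_le_mul_integral_sq hx.2 (hf'.mono hsub)
    _ ≤ (b - a) * ∫ y in a..b, f' y ^ 2 := by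
      refine mul_le_mul (by linarith [hx.1]) ?_ (integral_nonneg hx.2 fun y _ ↦ sq_nonneg _)
        (by linarith [hx.1, hx.2])
      exact integral_mono_interval hx.1 hx.2 le_rfl
        (Filter.Eventually.of_forall fun y ↦ sq_nonneg (f' y))
        ((hf'.pow 2).intervalIntegrable_of_Icc hab)

theorem integral_sq_le_mul_integral_deriv_sq_of_right_eq_zero (hab : a ≤ b)
    (hf : ∀ x ∈ Icc a b, HasDerivWithinAt f (f' x) (Icc a b) x)
    (hf' : ContinuousOn f' (Icc a b)) (hfb : f b = 0) :
    ∫ x in a..b, f x ^ 2 ≤ (b - a) ^ 2 * ∫ y in a..b, f' y ^ 2 := by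
  have hfc : ContinuousOn f (Icc a b) := fun x hx ↦ (hf x hx).continuousWithinAt
  calc ∫ x in a..b, f x ^ 2 ≤ ∫ _ in a..b, (b - a) * ∫ y in a..b, f' y ^ 2 :=
        integral_mono_on hab ((hfc.pow 2).intervalIntegrable_of_Icc hab) intervalIntegrable_const
          fun x hx ↦ sq_le_mul_integral_deriv_sq_of_right_eq_zero hab hf hf' hfb hx
    _ = (b - a) ^ 2 * ∫ y in a..b, f' y ^ 2 := by rw [integral_const, smul_eq_mul]; ring

theorem integral_two_mul_mul_le_of_abs_le {D η : ℝ} (hab : a ≤ b) (hη : 0 < η)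
    (hf : ContinuousOn f (Icc a b)) (hh : ContinuousOn h (Icc a b))
    (hD : ∀ x ∈ Ioo a b, |h x| ≤ D) :
    ∫ x in a..b, 2 * f x * h x ≤ η * (∫ x in a..b, f x ^ 2) + (b - a) * (D ^ 2 / η) := by
  have hf2 : IntervalIntegrable (fun x ↦ f x ^ 2) volume a b :=
    (hf.pow 2).intervalIntegrable_of_Icc hab
  calc ∫ x in a..b, 2 * f x * h x ≤ ∫ x in a..b, (η * f x ^ 2 + D ^ 2 / η) := by
        refine integral_mono_on_of_le_Ioo hab
          ((continuousOn_const.mul hf).mul hh |>.intervalIntegrable_of_Icc hab)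
          ((hf2.const_mul η).add intervalIntegrable_const) fun x hx ↦ ?_
        have hhD : h x ^ 2 ≤ D ^ 2 := sq_le_sq' (abs_le.mp (hD x hx)).1 (abs_le.mp (hD x hx)).2
        linarith [two_mul_le_mul_sq_add_sq_div hη (f x) (h x),
          div_le_div_of_nonneg_right hhD hη.le]
    _ = η * (∫ x in a..b, f x ^ 2) + (b - a) * (D ^ 2 / η) := by
      rw [integral_add (hf2.const_mul η) intervalIntegrable_const, integral_const_mul,
        integral_const, smul_eq_mul]

theorem integral_two_mul_mul_heat_operator_eq (μ M₁ M₂ : ℝ) (hab : a ≤ b)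
    (hf : ∀ x ∈ Icc a b, HasDerivWithinAt f (f' x) (Icc a b) x)
    (hf' : ∀ x ∈ Icc a b, HasDerivWithinAt f' (f'' x) (Icc a b) x)
    (hf'' : ContinuousOn f'' (Icc a b)) (hh : ContinuousOn h (Icc a b)) :
    ∫ x in a..b, 2 * f x * (μ * f'' x + h x + M₁ * f x + M₂ * f' x)
      = 2 * μ * (f b * f' b - f a * f' a) - 2 * μ * (∫ x in a..b, f' x ^ 2)
        + (∫ x in a..b, 2 * f x * h x) + 2 * M₁ * (∫ x in a..b, f x ^ 2)
        + M₂ * (f b ^ 2 - f a ^ 2) := by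
  have hfc : ContinuousOn f (Icc a b) := fun x hx ↦ (hf x hx).continuousWithinAt
  have hf'c : ContinuousOn f' (Icc a b) := fun x hx ↦ (hf' x hx).continuousWithinAt
  have hi : ∀ φ : ℝ → ℝ, ContinuousOn φ (Icc a b) → IntervalIntegrable φ volume a b :=
    fun φ hφ ↦ hφ.intervalIntegrable_of_Icc hab
  rw [← uIcc_of_le hab] at hf hf'
  have hibp₁ := integral_mul_deriv_eq_deriv_mul_of_hasDerivWithinAt hf hf' (hi _ hf'c) (hi _ hf'')
  have hibp₂ := integral_mul_deriv_eq_deriv_mul_of_hasDerivWithinAt hf hf (hi _ hf'c) (hi _ hf'c)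
  have hsplit : ∫ x in a..b, 2 * f x * (μ * f'' x + h x + M₁ * f x + M₂ * f' x)
      = 2 * μ * (∫ x in a..b, f x * f'' x) + (∫ x in a..b, 2 * f x * h x)
        + 2 * M₁ * (∫ x in a..b, f x ^ 2) + 2 * M₂ * (∫ x in a..b, f x * f' x) := by
    simp only [← integral_const_mul]
    rw [← integral_add, ← integral_add, ← integral_add]
    · congr 1; ext x; ring
    all_goals apply hi; fun_prop
  simp only [fun x ↦ mul_comm (f' x) (f x)] at hibp₂
  rw [hsplit, hibp₁]
  simp only [sq]
  linear_combination M₂ * hibp₂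

end Interval

theorem robin_boundary_term_le {μ b₁ b₂ δ ε p q : ℝ} (hb₂ : b₂ ≠ 0) (hε : 0 < ε)
    (hbc : b₁ * p + b₂ * q = δ) :
    -(2 * μ * p * q) ≤ (2 * μ * (b₁ / b₂) + ε) * p ^ 2 + (μ / b₂) ^ 2 / ε * δ ^ 2 := by
  have hq : q = (δ - b₁ * p) / b₂ := by field_simp; linarith
  have hyoung := two_mul_le_mul_sq_add_sq_div hε p (-(μ / b₂) * δ)
  have hsplit : -(2 * μ * p * q) = 2 * μ * (b₁ / b₂) * p ^ 2 + 2 * p * (-(μ / b₂) * δ) := by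
    rw [hq]; field_simp; ring
  rw [hsplit]
  linarith [show (-(μ / b₂) * δ) ^ 2 / ε = (μ / b₂) ^ 2 / ε * δ ^ 2 by ring]

theorem energy_rate_le {μ b₁ b₂ M₁ M₂ A₁ A₂ δ D η : ℝ} {f f' f'' h : ℝ → ℝ}
    (hb₂ : b₂ ≠ 0) (hA₁ : 0 ≤ A₁) (hA₂ : 0 ≤ A₂) (hμ : A₁ + A₂ = μ)
    (hA : b₁ / b₂ * μ - M₂ / 2 < A₁) (hη : 0 < η)
    (hf : ∀ x ∈ Icc (0 : ℝ) 1, HasDerivWithinAt f (f' x) (Icc 0 1) x)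
    (hf' : ∀ x ∈ Icc (0 : ℝ) 1, HasDerivWithinAt f' (f'' x) (Icc 0 1) x)
    (hf'' : ContinuousOn f'' (Icc 0 1)) (hh : ContinuousOn h (Icc 0 1))
    (hD : ∀ x ∈ Ioo (0 : ℝ) 1, |h x| ≤ D) (hf1 : f 1 = 0) (hf0 : b₁ * f 0 + b₂ * f' 0 = δ) :
    ∫ x in (0 : ℝ)..1, 2 * f x * (μ * f'' x + h x + M₁ * f x + M₂ * f' x)
      ≤ (η - 2 * (A₂ - M₁)) * (∫ x in (0 : ℝ)..1, f x ^ 2)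
        + (μ / b₂) ^ 2 / (2 * (A₁ - (b₁ / b₂ * μ - M₂ / 2))) * δ ^ 2 + D ^ 2 / η := by
  have hfc : ContinuousOn f (Icc 0 1) := fun x hx ↦ (hf x hx).continuousWithinAt
  have hf'c : ContinuousOn f' (Icc 0 1) := fun x hx ↦ (hf' x hx).continuousWithinAt
  have hid := integral_two_mul_mul_heat_operator_eq μ M₁ M₂ zero_le_one hf hf' hf'' hh
  -- Young's parameter is chosen so that the `f 0 ^ 2` terms cancel against `2 A₁ f 0 ^ 2`.
  have hbd := robin_boundary_term_le (μ := μ) hb₂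
    (by linarith : 0 < 2 * (A₁ - (b₁ / b₂ * μ - M₂ / 2))) hf0
  have hP₀ := sq_le_mul_integral_deriv_sq_of_right_eq_zero zero_le_one hf hf'c hf1
    (left_mem_Icc.2 zero_le_one)
  have hP := integral_sq_le_mul_integral_deriv_sq_of_right_eq_zero zero_le_one hf hf'c hf1
  have hforce := integral_two_mul_mul_le_of_abs_le zero_le_one hη hfc hh hD
  simp only [sub_zero, one_pow, one_mul] at hP₀ hP hforce
  have hpoinc : A₁ * f 0 ^ 2 + A₂ * (∫ x in (0 : ℝ)..1, f x ^ 2)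
      ≤ μ * ∫ x in (0 : ℝ)..1, f' x ^ 2 := by
    rw [← hμ]
    nlinarith [mul_le_mul_of_nonneg_left hP₀ hA₁, mul_le_mul_of_nonneg_left hP hA₂]
  rw [hid, hf1]
  linarith

section Gronwall

variable {E E' g : ℝ → ℝ} {C a t : ℝ}

theorem hasDerivAt_integral_of_continuousOn_Ici (hg : ContinuousOn g (Ici a)) (ht : a < t) :
    HasDerivAt (fun s ↦ ∫ r in a..s, g r) (g t) t :=
  integral_hasDerivAt_right ((hg.mono Icc_subset_Ici_self).intervalIntegrable_of_Icc ht.le)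
    ((hg.mono Ioi_subset_Ici_self).stronglyMeasurableAtFilter isOpen_Ioi t ht)
    (hg.continuousAt (Ici_mem_nhds ht))

theorem le_exp_mul_add_integral_of_hasDerivAt_le (hE : ContinuousOn E (Ici a))
    (hg : ContinuousOn g (Ici a)) (hE' : ∀ s > a, HasDerivAt E (E' s) s)
    (hle : ∀ s > a, E' s ≤ -C * E s + g s) (ht : a ≤ t) :
    E t ≤ E a * exp (-C * (t - a)) + ∫ s in a..t, exp (-C * (t - s)) * g s := by
  have hexp : Continuous fun s ↦ exp (C * s) := by fun_prop
  have hφ : ContinuousOn (fun s ↦ exp (C * s) * g s) (Ici a) := hexp.continuousOn.mul hg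
  set F : ℝ → ℝ := fun s ↦ exp (C * s) * E s - ∫ r in a..s, exp (C * r) * g r
  have hF : AntitoneOn F (Icc a t) := by
    refine antitoneOn_of_hasDerivWithinAt_nonpos (convex_Icc a t)
      (f' := fun s ↦ exp (C * s) * (E' s + C * E s - g s)) ?_ (fun s hs ↦ ?_) (fun s hs ↦ ?_)
    · refine (hexp.continuousOn.mul (hE.mono Icc_subset_Ici_self)).sub ?_
      have := continuousOn_primitive_interval (μ := volume) (a := a) (b := t)
        ((hφ.mono (uIcc_of_le ht ▸ Icc_subset_Ici_self)).integrableOn_compact isCompact_uIcc)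
      rwa [uIcc_of_le ht] at this
    · rw [interior_Icc] at hs
      have hd := ((hasDerivAt_id s).const_mul C).exp.mul (hE' s hs.1)
        |>.sub (hasDerivAt_integral_of_continuousOn_Ici hφ hs.1)
      refine (hd.congr_deriv ?_).hasDerivWithinAt
      simp only [id]
      ring
    · rw [interior_Icc] at hs
      exact mul_nonpos_of_nonneg_of_nonpos (exp_pos _).le (by linarith [hle s hs.1])
  have hFt : F t ≤ F a := hF (left_mem_Icc.2 ht) (right_mem_Icc.2 ht) ht
  simp only [F, integral_same, sub_zero] at hFt
  have hint : ∫ s in a..t, exp (-C * (t - s)) * g s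
      = exp (-C * t) * ∫ s in a..t, exp (C * s) * g s := by
    rw [← integral_const_mul]
    congr 1; ext s
    rw [← mul_assoc, ← exp_add]; ring_nf
  have hinv : exp (-C * t) * exp (C * t) = 1 := by rw [← exp_add]; simp
  calc E t = exp (-C * t) * (exp (C * t) * E t) := by rw [← mul_assoc, hinv, one_mul]
    _ ≤ exp (-C * t) * (exp (C * a) * E a + ∫ s in a..t, exp (C * s) * g s) :=
        mul_le_mul_of_nonneg_left (by linarith) (exp_pos _).le
    _ = E a * exp (-C * (t - a)) + ∫ s in a..t, exp (-C * (t - s)) * g s := by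
        rw [hint, mul_add, ← mul_assoc, ← exp_add]; ring_nf

theorem integral_exp_mul_le_integral (hC : 0 ≤ C) (ht : a ≤ t) (hg : ContinuousOn g (Icc a t))
    (hg₀ : ∀ s ∈ Icc a t, 0 ≤ g s) :
    ∫ s in a..t, exp (-C * (t - s)) * g s ≤ ∫ s in a..t, g s :=
  integral_mono_on ht ((by fun_prop : Continuous fun s ↦ exp (-C * (t - s))).continuousOn.mul hg
      |>.intervalIntegrable_of_Icc ht) (hg.intervalIntegrable_of_Icc ht) fun s hs ↦
    mul_le_of_le_one_left (hg₀ s hs) (exp_le_one_iff.2 (by nlinarith [hs.2]))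

theorem integral_exp_mul_le_of_le_const {G : ℝ} (hC : 0 < C) (ht : a ≤ t)
    (hg : ContinuousOn g (Icc a t)) (hgG : ∀ s ∈ Icc a t, g s ≤ G) :
    ∫ s in a..t, exp (-C * (t - s)) * g s ≤ (1 - exp (-C * (t - a))) * (G / C) := by
  have hexp : Continuous fun s ↦ exp (-C * (t - s)) := by fun_prop
  have hprim : ∀ s ∈ uIcc a t,
      HasDerivAt (fun s ↦ exp (-C * (t - s)) / C) (exp (-C * (t - s))) s := by
    intro s _
    refine ((((hasDerivAt_id s).const_sub t).const_mul (-C)).exp.div_const C).congr_deriv ?_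
    field_simp
    simp
  calc ∫ s in a..t, exp (-C * (t - s)) * g s ≤ ∫ s in a..t, exp (-C * (t - s)) * G :=
        integral_mono_on ht ((hexp.continuousOn.mul hg).intervalIntegrable_of_Icc ht)
          ((hexp.mul continuous_const).intervalIntegrable a t) fun s hs ↦
            mul_le_mul_of_nonneg_left (hgG s hs) (exp_pos _).le
    _ = (1 - exp (-C * (t - a))) * (G / C) := by
        rw [integral_mul_const, integral_eq_sub_of_hasDerivAt hprim (hexp.intervalIntegrable a t)]
        simp only [sub_self, mul_zero, exp_zero]
        ring

end Gronwall

theorem le_exp_add_integral_sq_of_hasDerivAt_le {E E' d₁ d₂ : ℝ → ℝ} {C K₁ K₂ κ t : ℝ}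
    (hC : 0 < C) (hK₁ : 0 ≤ K₁) (hK₂ : 0 ≤ K₂) (hκ : 1 ≤ κ) (hE : ContinuousOn E (Ici 0))
    (hd₁ : ContinuousOn d₁ (Ici 0)) (hd₂ : ContinuousOn d₂ (Ici 0))
    (hE' : ∀ s > 0, HasDerivAt E (E' s) s)
    (hle : ∀ s > 0, E' s ≤ -C * E s + (K₁ * d₁ s ^ 2 + K₂ * d₂ s ^ 2)) (ht : 0 ≤ t) :
    E t ≤ E 0 * exp (-C * t) + κ * K₁ * (∫ s in (0 : ℝ)..t, d₁ s ^ 2)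
      + κ * K₂ * (∫ s in (0 : ℝ)..t, d₂ s ^ 2) := by
  have hg : ContinuousOn (fun s ↦ K₁ * d₁ s ^ 2 + K₂ * d₂ s ^ 2) (Ici 0) := by fun_prop
  have hgr := le_exp_mul_add_integral_of_hasDerivAt_le hE hg hE' hle ht
  have hforce := integral_exp_mul_le_integral hC.le ht (hg.mono Icc_subset_Ici_self)
    fun s _ ↦ by positivity
  have hi : ∀ φ : ℝ → ℝ, ContinuousOn φ (Ici 0) → IntervalIntegrable φ volume 0 t :=
    fun φ hφ ↦ (hφ.mono Icc_subset_Ici_self).intervalIntegrable_of_Icc ht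
  rw [integral_add ((hi (fun s ↦ d₁ s ^ 2) (hd₁.pow 2)).const_mul _)
    ((hi (fun s ↦ d₂ s ^ 2) (hd₂.pow 2)).const_mul _),
    integral_const_mul, integral_const_mul] at hforce
  have hI₁ : 0 ≤ ∫ s in (0 : ℝ)..t, d₁ s ^ 2 := integral_nonneg ht fun s _ ↦ sq_nonneg _
  have hI₂ : 0 ≤ ∫ s in (0 : ℝ)..t, d₂ s ^ 2 := integral_nonneg ht fun s _ ↦ sq_nonneg _
  rw [sub_zero] at hgr
  nlinarith [mul_nonneg (mul_nonneg (sub_nonneg.2 hκ) hK₁) hI₁,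
    mul_nonneg (mul_nonneg (sub_nonneg.2 hκ) hK₂) hI₂]

theorem le_exp_add_sSup_sq_of_hasDerivAt_le {E E' d₁ d₂ : ℝ → ℝ} {C K₁ K₂ κ t : ℝ}
    (hC : 0 < C) (hK₁ : 0 ≤ K₁) (hK₂ : 0 ≤ K₂) (hκ : C⁻¹ ≤ κ) (hE : ContinuousOn E (Ici 0))
    (hd₁ : ContinuousOn d₁ (Ici 0)) (hd₂ : ContinuousOn d₂ (Ici 0))
    (hE' : ∀ s > 0, HasDerivAt E (E' s) s)
    (hle : ∀ s > 0, E' s ≤ -C * E s + (K₁ * d₁ s ^ 2 + K₂ * d₂ s ^ 2)) (ht : 0 ≤ t) :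
    E t ≤ E 0 * exp (-C * t) + (1 - exp (-C * t)) *
      (κ * K₁ * sSup ((fun s ↦ d₁ s ^ 2) '' Icc 0 t)
        + κ * K₂ * sSup ((fun s ↦ d₂ s ^ 2) '' Icc 0 t)) := by
  set S₁ := sSup ((fun s ↦ d₁ s ^ 2) '' Icc 0 t)
  set S₂ := sSup ((fun s ↦ d₂ s ^ 2) '' Icc 0 t)
  have hS₁ : ∀ s ∈ Icc 0 t, d₁ s ^ 2 ≤ S₁ := fun s hs ↦
    ((hd₁.mono Icc_subset_Ici_self).pow 2).le_sSup_image_Icc hs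
  have hS₂ : ∀ s ∈ Icc 0 t, d₂ s ^ 2 ≤ S₂ := fun s hs ↦
    ((hd₂.mono Icc_subset_Ici_self).pow 2).le_sSup_image_Icc hs
  have hg : ContinuousOn (fun s ↦ K₁ * d₁ s ^ 2 + K₂ * d₂ s ^ 2) (Ici 0) := by fun_prop
  have hgr := le_exp_mul_add_integral_of_hasDerivAt_le hE hg hE' hle ht
  have hforce := integral_exp_mul_le_of_le_const hC ht (hg.mono Icc_subset_Ici_self)
    (G := K₁ * S₁ + K₂ * S₂) fun s hs ↦ add_le_add
      (mul_le_mul_of_nonneg_left (hS₁ s hs) hK₁) (mul_le_mul_of_nonneg_left (hS₂ s hs) hK₂)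
  have hS₁₀ : 0 ≤ S₁ := (sq_nonneg _).trans (hS₁ 0 (left_mem_Icc.2 ht))
  have hS₂₀ : 0 ≤ S₂ := (sq_nonneg _).trans (hS₂ 0 (left_mem_Icc.2 ht))
  have hG : (K₁ * S₁ + K₂ * S₂) / C ≤ κ * K₁ * S₁ + κ * K₂ * S₂ := by
    rw [div_eq_inv_mul]
    nlinarith [mul_nonneg (mul_nonneg (sub_nonneg.2 hκ) hK₁) hS₁₀,
      mul_nonneg (mul_nonneg (sub_nonneg.2 hκ) hK₂) hS₂₀]
  have hdecay : 0 ≤ 1 - exp (-C * t) := sub_nonneg.2 (exp_le_one_iff.2 (by nlinarith))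
  rw [sub_zero] at hgr hforce
  nlinarith [mul_le_mul_of_nonneg_left hG hdecay]

theorem stmt_16
    (μ b₁ b₂ M₁ M₂ : ℝ) (d : ℝ → ℝ → ℝ) (d₁ d₂ : ℝ → ℝ)
    (hμ : 0 < μ) (hb₂ : b₂ ≠ 0)
    (hd₁ : ContDiffOn ℝ 2 d₁ (Ici 0)) (hd₂ : ContinuousOn d₂ (Ici 0))
    (hdcont : ContinuousOn (fun p : ℝ × ℝ => d p.1 p.2) (Ici 0 ×ˢ Icc 0 1))
    (hd : ∀ t ≥ (0:ℝ), ∀ x ∈ Ioo (0:ℝ) 1, |d t x| ≤ |d₂ t|)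
    -- Assumption A3c
    (hA' : ∃ A₁' A₂' : ℝ, 0 ≤ A₁' ∧ 0 ≤ A₂' ∧ A₁' + A₂' = μ ∧
      b₁ / b₂ * μ - M₂ / 2 < A₁' ∧ M₁ < A₂' - 2 * A₁') :
    ∃ C₃ > (0:ℝ), ∃ C₄ > (0:ℝ), ∃ C₅ > (0:ℝ),
      ∀ u ux uxx ut : ℝ → ℝ → ℝ,
        (∀ t ≥ (0:ℝ), ∀ x ∈ Icc (0:ℝ) 1, HasDerivWithinAt (u t) (ux t x) (Icc 0 1) x) →
        (∀ t ≥ (0:ℝ), ∀ x ∈ Icc (0:ℝ) 1, HasDerivWithinAt (ux t) (uxx t x) (Icc 0 1) x) →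
        (∀ t ≥ (0:ℝ), ContinuousOn (uxx t) (Icc (0:ℝ) 1)) →
        (∀ t > (0:ℝ), ∀ x ∈ Icc (0:ℝ) 1, HasDerivAt (fun s => u s x) (ut t x) t) →
        (∀ t > (0:ℝ), ∀ x ∈ Ioo (0:ℝ) 1,
          ut t x = μ * uxx t x + d t x + M₁ * u t x + M₂ * ux t x) →
        (∀ t ≥ (0:ℝ), u t 1 = 0) →
        (∀ t ≥ (0:ℝ), b₁ * u t 0 + b₂ * ux t 0 = d₁ t) →
        ContinuousOn (fun t => ∫ x in (0:ℝ)..1, (u t x) ^ 2) (Ici 0) →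
        (∀ t > (0:ℝ), HasDerivAt (fun s => ∫ x in (0:ℝ)..1, (u s x) ^ 2)
          (∫ x in (0:ℝ)..1, 2 * u t x * ut t x) t) →
        ∀ t ≥ (0:ℝ),
          ((∫ x in (0:ℝ)..1, (u t x) ^ 2) ≤
            (∫ x in (0:ℝ)..1, (u 0 x) ^ 2) * Real.exp (-C₃ * t)
              + C₄ * (∫ s in (0:ℝ)..t, (d₁ s) ^ 2)
              + C₅ * (∫ s in (0:ℝ)..t, (d₂ s) ^ 2)) ∧
          ((∫ x in (0:ℝ)..1, (u t x) ^ 2) ≤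
            (∫ x in (0:ℝ)..1, (u 0 x) ^ 2) * Real.exp (-C₃ * t)
              + (1 - Real.exp (-C₃ * t)) *
                (C₄ * sSup ((fun s => (d₁ s) ^ 2) '' Icc 0 t)
                  + C₅ * sSup ((fun s => (d₂ s) ^ 2) '' Icc 0 t))) := by
  obtain ⟨A₁, A₂, hA₁, hA₂, hμA, hA, hM⟩ := hA'
  set C₃ := A₂ - M₁
  set K₁ := (μ / b₂) ^ 2 / (2 * (A₁ - (b₁ / b₂ * μ - M₂ / 2)))
  have hC₃ : 0 < C₃ := by linarith
  have hK₁ : 0 < K₁ := div_pos (by positivity) (by linarith)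
  refine ⟨C₃, hC₃, max 1 C₃⁻¹ * K₁, by positivity, max 1 C₃⁻¹ * C₃⁻¹, by positivity, ?_⟩
  intro u ux uxx ut hux huxx huxxc _ hpde hu1 hu0 hEc hEd t ht
  have hrate : ∀ s > 0, ∫ x in (0 : ℝ)..1, 2 * u s x * ut s x
      ≤ -C₃ * (∫ x in (0 : ℝ)..1, u s x ^ 2) + (K₁ * d₁ s ^ 2 + C₃⁻¹ * d₂ s ^ 2) := by
    intro s hs
    have hds : ContinuousOn (d s) (Icc 0 1) :=
      hdcont.comp (continuousOn_const.prodMk continuousOn_id) fun x hx ↦ ⟨hs.le, hx⟩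
    have hdiss := energy_rate_le (M₁ := M₁) hb₂ hA₁ hA₂ hμA hA hC₃ (hux s hs.le) (huxx s hs.le)
      (huxxc s hs.le) hds (hd s hs.le) (hu1 s hs.le) (hu0 s hs.le)
    calc ∫ x in (0 : ℝ)..1, 2 * u s x * ut s x
        = ∫ x in (0 : ℝ)..1, 2 * u s x * (μ * uxx s x + d s x + M₁ * u s x + M₂ * ux s x) :=
          integral_congr_of_eqOn_Ioo zero_le_one fun x hx ↦ by rw [hpde s hs x hx]
      _ ≤ _ := by
          rw [sq_abs] at hdiss
          linear_combination hdiss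
  exact ⟨le_exp_add_integral_sq_of_hasDerivAt_le hC₃ hK₁.le (inv_pos.2 hC₃).le
      (le_max_left _ _) hEc hd₁.continuousOn hd₂ hEd hrate ht,
    le_exp_add_sSup_sq_of_hasDerivAt_le hC₃ hK₁.le (inv_pos.2 hC₃).le
      (le_max_right _ _) hEc hd₁.continuousOn hd₂ hEd hrate ht⟩
end
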